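/- arXiv:2208.04839 — 2 statements merged into one kernel-verified Lean document; each statement's English description precedes it below -/
import Mathlib

section
/- Suppose A = V ∖ {0}, the Legendre map ℒ : V ∖ {0} → V*, ℒ(v) := g_v(v,·), is a bijection onto V* ∖ {0}, and the Legendre map ℒ̃ of L̃, ℒ̃(ṽ) := g̃_ṽ(ṽ,·), is injective on Ã (both conditions hold automatically when the metrics are defined on the whole slit space and the dimensions are at least 3). Then for every ṽ ∈ Ã there is exactly one horizontal v ∈ V ∖ {0} with π(v) = ṽ. -/
/-- Pseudo-Finsler data on a real normed vector space `V`: an open conic set `A` of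
admissible vectors avoiding `0`, a positively `2`-homogeneous function `L` smooth on `A`,
and the fundamental tensor `g`, given by the second fiber derivative of `L`, which is
required to be symmetric and nondegenerate at every admissible vector. -/
structure PseudoFinslerData (V : Type*) [NormedAddCommGroup V] [NormedSpace ℝ V] where
  A : Set V
  L : V → ℝ
  g : V → V →ₗ[ℝ] V →ₗ[ℝ] ℝ
  A_ne_zero : ∀ v ∈ A, v ≠ 0
  A_open : IsOpen A
  A_cone : ∀ v ∈ A, ∀ c : ℝ, 0 < c → c • v ∈ A
  L_smooth : ContDiffOn ℝ (⊤ : ℕ∞) L A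
  L_homog : ∀ v ∈ A, ∀ c : ℝ, 0 < c → L (c • v) = c ^ 2 * L v
  g_def : ∀ v ∈ A, ∀ e h : V,
    g v e h = (1 / 2) * deriv (fun s : ℝ => deriv (fun t : ℝ => L (v + s • e + t • h)) 0) 0
  g_symm : ∀ v ∈ A, ∀ e h : V, g v e h = g v h e
  g_nondeg : ∀ v ∈ A, ∀ e : V, (∀ h : V, g v e h = 0) → e = 0

namespace PFAux

open Filter Set Topology

variable {V : Type*} [NormedAddCommGroup V] [NormedSpace ℝ V]

theorem hasFDerivAt_L (D : PseudoFinslerData V) {v : V} (hv : v ∈ D.A) :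
    HasFDerivAt D.L (fderiv ℝ D.L v) v := by
  have h1 : DifferentiableOn ℝ D.L D.A :=
    D.L_smooth.differentiableOn (by simp)
  exact (h1.differentiableAt (D.A_open.mem_nhds hv)).hasFDerivAt

theorem contDiffOn_f' (D : PseudoFinslerData V) :
    ContDiffOn ℝ (⊤ : ℕ∞) (fderiv ℝ D.L) D.A :=
  D.L_smooth.fderiv_of_isOpen D.A_open (by exact_mod_cast le_top)

theorem hasFDerivAt_f' (D : PseudoFinslerData V) {v : V} (hv : v ∈ D.A) :
    HasFDerivAt (fderiv ℝ D.L) (fderiv ℝ (fderiv ℝ D.L) v) v := by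
  have h1 : DifferentiableOn ℝ (fderiv ℝ D.L) D.A :=
    (contDiffOn_f' D).differentiableOn (by simp)
  exact (h1.differentiableAt (D.A_open.mem_nhds hv)).hasFDerivAt

/-- The fundamental tensor is one half of the second Fréchet derivative of `L`. -/
theorem g_eq (D : PseudoFinslerData V) {v : V} (hv : v ∈ D.A) (e h : V) :
    D.g v e h = 2⁻¹ * (fderiv ℝ (fderiv ℝ D.L) v e h) := by
  rw [D.g_def v hv e h]
  have key : deriv (fun s : ℝ => deriv (fun t : ℝ => D.L (v + s • e + t • h)) 0) 0
      = fderiv ℝ (fderiv ℝ D.L) v e h := by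
    have hmem : ∀ᶠ s : ℝ in 𝓝 0, v + s • e ∈ D.A := by
      have hc : Continuous fun s : ℝ => v + s • e := by continuity
      have : (fun s : ℝ => v + s • e) ⁻¹' D.A ∈ 𝓝 (0 : ℝ) := by
        apply hc.continuousAt.preimage_mem_nhds
        simpa using D.A_open.mem_nhds hv
      filter_upwards [this] with s hs using hs
    have h1 : (fun s : ℝ => deriv (fun t : ℝ => D.L (v + s • e + t • h)) 0)
        =ᶠ[𝓝 0] fun s => fderiv ℝ D.L (v + s • e) h := by
      filter_upwards [hmem] with s hs
      have hline : HasDerivAt (fun t : ℝ => v + s • e + t • h) h 0 := by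
        simpa using ((hasDerivAt_id (0:ℝ)).smul_const h).const_add (v + s • e)
      have hcomp : HasDerivAt (fun t : ℝ => D.L (v + s • e + t • h))
          (fderiv ℝ D.L (v + s • e) h) 0 := by
        have := (hasFDerivAt_L D hs).comp_hasDerivAt_of_eq 0 hline (by simp)
        simpa [Function.comp_def] using this
      exact hcomp.deriv
    rw [h1.deriv_eq]
    have hline : HasDerivAt (fun s : ℝ => v + s • e) e 0 := by
      simpa using ((hasDerivAt_id (0:ℝ)).smul_const e).const_add v
    have h3 : HasDerivAt (fun s : ℝ => fderiv ℝ D.L (v + s • e))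
        (fderiv ℝ (fderiv ℝ D.L) v e) 0 := by
      have := (hasFDerivAt_f' D hv).comp_hasDerivAt_of_eq 0 hline (by simp)
      simpa [Function.comp_def] using this
    have h4 : HasDerivAt (fun s : ℝ => fderiv ℝ D.L (v + s • e) h)
        (fderiv ℝ (fderiv ℝ D.L) v e h) 0 := by
      have := (ContinuousLinearMap.apply ℝ ℝ h).hasFDerivAt.comp_hasDerivAt 0 h3
      simpa [Function.comp_def] using this
    exact h4.deriv
  rw [key]; norm_num

theorem f'_homog (D : PseudoFinslerData V) {v : V} (hv : v ∈ D.A) {c : ℝ} (hc : 0 < c) :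
    fderiv ℝ D.L (c • v) = c • fderiv ℝ D.L v := by
  have hsm : HasFDerivAt (fun x : V => c • x) (c • ContinuousLinearMap.id ℝ V) v := by
    exact (hasFDerivAt_id v).const_smul c
  have h1 : HasFDerivAt (fun x : V => D.L (c • x))
      ((fderiv ℝ D.L (c • v)).comp (c • ContinuousLinearMap.id ℝ V)) v :=
    (hasFDerivAt_L D (D.A_cone v hv c hc)).comp v hsm
  have h2 : HasFDerivAt (fun x : V => c ^ 2 * D.L x) ((c ^ 2) • fderiv ℝ D.L v) v :=
    (hasFDerivAt_L D hv).const_mul (c ^ 2)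
  have heq : (fun x : V => D.L (c • x)) =ᶠ[𝓝 v] (fun x : V => c ^ 2 * D.L x) := by
    filter_upwards [D.A_open.mem_nhds hv] with x hx using D.L_homog x hx c hc
  have h3 := (h1.congr_of_eventuallyEq heq.symm).unique h2
  ext u
  have := congrFun (congrArg (fun (A : V →L[ℝ] ℝ) => (A : V → ℝ)) h3) u
  simp only [ContinuousLinearMap.coe_comp', ContinuousLinearMap.coe_smul',
    Function.comp_apply, Pi.smul_apply, ContinuousLinearMap.coe_id', id_eq,
    smul_eq_mul] at this ⊢
  rw [map_smul, smul_eq_mul] at this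
  have h4 : c * ((fderiv ℝ D.L (c • v)) u) = c * (c * ((fderiv ℝ D.L v) u)) := by
    rw [this]; ring
  exact mul_left_cancel₀ (ne_of_gt hc) h4

theorem euler2 (D : PseudoFinslerData V) {v : V} (hv : v ∈ D.A) :
    fderiv ℝ (fderiv ℝ D.L) v v = fderiv ℝ D.L v := by
  have hline : HasDerivAt (fun c : ℝ => c • v) v 1 := by
    simpa using (hasDerivAt_id (1:ℝ)).smul_const v
  have h1 : HasDerivAt (fun c : ℝ => fderiv ℝ D.L (c • v)) (fderiv ℝ (fderiv ℝ D.L) v v) 1 := by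
    have := (hasFDerivAt_f' D hv).comp_hasDerivAt_of_eq 1 hline (by simp)
    simpa [Function.comp_def] using this
  have h2 : HasDerivAt (fun c : ℝ => c • fderiv ℝ D.L v) (fderiv ℝ D.L v) 1 := by
    simpa using (hasDerivAt_id (1:ℝ)).smul_const (fderiv ℝ D.L v)
  have heq : (fun c : ℝ => fderiv ℝ D.L (c • v)) =ᶠ[𝓝 (1:ℝ)]
      (fun c : ℝ => c • fderiv ℝ D.L v) := by
    filter_upwards [eventually_gt_nhds zero_lt_one] with c hc using f'_homog D hv hc
  exact (h1.congr_of_eventuallyEq heq.symm).unique h2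

theorem f''_homog (D : PseudoFinslerData V) {v : V} (hv : v ∈ D.A) {c : ℝ} (hc : 0 < c) :
    fderiv ℝ (fderiv ℝ D.L) (c • v) = fderiv ℝ (fderiv ℝ D.L) v := by
  have hsm : HasFDerivAt (fun x : V => c • x) (c • ContinuousLinearMap.id ℝ V) v := by
    exact (hasFDerivAt_id v).const_smul c
  have h1 : HasFDerivAt (fun x : V => fderiv ℝ D.L (c • x))
      ((fderiv ℝ (fderiv ℝ D.L) (c • v)).comp (c • ContinuousLinearMap.id ℝ V)) v :=
    (hasFDerivAt_f' D (D.A_cone v hv c hc)).comp v hsm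
  have h2 : HasFDerivAt (fun x : V => c • fderiv ℝ D.L x) (c • fderiv ℝ (fderiv ℝ D.L) v) v :=
    (hasFDerivAt_f' D hv).const_smul c
  have heq : (fun x : V => fderiv ℝ D.L (c • x)) =ᶠ[𝓝 v] (fun x : V => c • fderiv ℝ D.L x) := by
    filter_upwards [D.A_open.mem_nhds hv] with x hx using f'_homog D hx hc
  have h3 := (h1.congr_of_eventuallyEq heq.symm).unique h2
  ext u w
  have := congrFun (congrArg (fun (A : V →L[ℝ] (V →L[ℝ] ℝ)) => (A : V → V →L[ℝ] ℝ)) h3) u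
  simp only [ContinuousLinearMap.coe_comp', ContinuousLinearMap.coe_smul',
    Function.comp_apply, Pi.smul_apply, ContinuousLinearMap.coe_id', id_eq] at this
  rw [map_smul] at this
  have h4 : c • ((fderiv ℝ (fderiv ℝ D.L) (c • v)) u) = c • ((fderiv ℝ (fderiv ℝ D.L) v) u) :=
    this
  have h5 := congrFun (congrArg (fun (A : V →L[ℝ] ℝ) => (A : V → ℝ)) h4) w
  simp only [ContinuousLinearMap.coe_smul', Pi.smul_apply, smul_eq_mul] at h5
  exact mul_left_cancel₀ (ne_of_gt hc) h5

theorem g_homog (D : PseudoFinslerData V) {v : V} (hv : v ∈ D.A) {c : ℝ} (hc : 0 < c)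
    (e h : V) : D.g (c • v) e h = D.g v e h := by
  rw [g_eq D (D.A_cone v hv c hc), g_eq D hv, f''_homog D hv hc]

section FinDim

open Filter Set Topology

variable {V : Type*} [NormedAddCommGroup V] [NormedSpace ℝ V] [FiniteDimensional ℝ V]

/-- The Legendre map of a pseudo-Finsler datum, as a map to the topological dual. -/
noncomputable def Lam (D : PseudoFinslerData V) (v : V) : V →L[ℝ] ℝ :=
  LinearMap.toContinuousLinearMap (D.g v v)

theorem Lam_apply (D : PseudoFinslerData V) (v h : V) : Lam D v h = D.g v v h := rfl

theorem Lam_inj (D : PseudoFinslerData V) {v w : V} (h : Lam D v = Lam D w) :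
    D.g v v = D.g w w := by
  ext u
  exact congrFun (congrArg (fun (A : V →L[ℝ] ℝ) => (A : V → ℝ)) h) u

/-- Candidate derivative of the Legendre map. -/
noncomputable def gh (D : PseudoFinslerData V) (v : V) : V →L[ℝ] (V →L[ℝ] ℝ) :=
  (2⁻¹ : ℝ) • (fderiv ℝ (fderiv ℝ D.L) v)

theorem gh_apply (D : PseudoFinslerData V) {v : V} (hv : v ∈ D.A) (e h : V) :
    gh D v e h = D.g v e h := by
  rw [g_eq D hv e h]; rfl

theorem Lam_eq (D : PseudoFinslerData V) {v : V} (hv : v ∈ D.A) :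
    Lam D v = (2⁻¹ : ℝ) • fderiv ℝ D.L v := by
  ext h
  have h1 : Lam D v h = D.g v v h := rfl
  rw [h1, g_eq D hv v h, euler2 D hv]
  rfl

theorem hasFDerivAt_Lam (D : PseudoFinslerData V) {v : V} (hv : v ∈ D.A) :
    HasFDerivAt (Lam D) (gh D v) v := by
  have h1 : HasFDerivAt (fun x => (2⁻¹ : ℝ) • fderiv ℝ D.L x) (gh D v) v :=
    (hasFDerivAt_f' D hv).const_smul (2⁻¹ : ℝ)
  apply h1.congr_of_eventuallyEq
  filter_upwards [D.A_open.mem_nhds hv] with x hx using Lam_eq D hx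

theorem contDiffOn_Lam (D : PseudoFinslerData V) :
    ContDiffOn ℝ (⊤ : ℕ∞) (Lam D) D.A := by
  have h1 : ContDiffOn ℝ (⊤ : ℕ∞) (fun x => (2⁻¹ : ℝ) • fderiv ℝ D.L x) D.A :=
    (contDiffOn_f' D).const_smul (2⁻¹ : ℝ)
  exact h1.congr fun x hx => Lam_eq D hx

theorem Lam_homog (D : PseudoFinslerData V) {v : V} (hv : v ∈ D.A) {c : ℝ} (hc : 0 < c) :
    Lam D (c • v) = c • Lam D v := by
  ext h
  have h1 : Lam D (c • v) h = D.g (c • v) (c • v) h := rfl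
  rw [h1, map_smul]
  have h2 : D.g (c • v) v h = D.g v v h := g_homog D hv hc v h
  simp only [LinearMap.smul_apply, smul_eq_mul] at h2 ⊢
  rw [h2]
  rfl

theorem Lam_ne_zero (D : PseudoFinslerData V) {v : V} (hv : v ∈ D.A) : Lam D v ≠ 0 := by
  intro h0
  apply D.A_ne_zero v hv
  apply D.g_nondeg v hv v
  intro h
  have := congrFun (congrArg (fun (A : V →L[ℝ] ℝ) => (A : V → ℝ)) h0) h
  simpa [Lam_apply] using this

theorem gh_bijective (D : PseudoFinslerData V) {v : V} (hv : v ∈ D.A) :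
    Function.Bijective (gh D v) := by
  have hinj : Function.Injective (gh D v) := by
    intro a b hab
    have h0 : gh D v (a - b) = 0 := by rw [map_sub, hab, sub_self]
    have : a - b = 0 := by
      apply D.g_nondeg v hv
      intro h
      have := congrFun (congrArg (fun (A : V →L[ℝ] ℝ) => (A : V → ℝ)) h0) h
      rw [← gh_apply D hv (a - b) h]
      simpa using this
    rwa [sub_eq_zero] at this
  constructor
  · exact hinj
  · have hfr : Module.finrank ℝ V = Module.finrank ℝ (V →L[ℝ] ℝ) := by
      rw [(LinearMap.toContinuousLinearMap (𝕜 := ℝ) (E := V) (F' := ℝ)).finrank_eq.symm]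
      exact (Subspace.dual_finrank_eq (K := ℝ) (V := V)).symm
    have := (LinearMap.injective_iff_surjective_of_finrank_eq_finrank hfr
      (f := (gh D v : V →ₗ[ℝ] (V →L[ℝ] ℝ)))).mp hinj
    exact this

/-- The derivative of the Legendre map as a continuous linear equivalence. -/
noncomputable def ghE (D : PseudoFinslerData V) {v : V} (hv : v ∈ D.A) :
    V ≃L[ℝ] (V →L[ℝ] ℝ) :=
  LinearEquiv.toContinuousLinearEquiv
    (LinearEquiv.ofBijective ((gh D v : V →ₗ[ℝ] (V →L[ℝ] ℝ))) (gh_bijective D hv))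

theorem ghE_apply (D : PseudoFinslerData V) {v : V} (hv : v ∈ D.A) (x : V) :
    ghE D hv x = gh D v x := rfl

theorem ghE_coe (D : PseudoFinslerData V) {v : V} (hv : v ∈ D.A) :
    ((ghE D hv : V →L[ℝ] (V →L[ℝ] ℝ))) = gh D v := by
  ext x; rfl

theorem hasFDerivAt_Lam' (D : PseudoFinslerData V) {v : V} (hv : v ∈ D.A) :
    HasFDerivAt (Lam D) ((ghE D hv : V →L[ℝ] (V →L[ℝ] ℝ))) v := by
  rw [ghE_coe]; exact hasFDerivAt_Lam D hv

/-- Global inverse of the Legendre map, defined by choice. -/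
noncomputable def Linv (D : PseudoFinslerData V) (φ : V →L[ℝ] ℝ) : V :=
  open scoped Classical in
  if h : ∃ v, v ∈ D.A ∧ Lam D v = φ then h.choose else 0

theorem Linv_spec (D : PseudoFinslerData V)
    (hsurj : ∀ φ : V →ₗ[ℝ] ℝ, φ ≠ 0 → ∃ v ∈ D.A, D.g v v = φ)
    {φ : V →L[ℝ] ℝ} (hφ : φ ≠ 0) : Linv D φ ∈ D.A ∧ Lam D (Linv D φ) = φ := by
  have hex : ∃ v, v ∈ D.A ∧ Lam D v = φ := by
    have hφ' : (φ : V →ₗ[ℝ] ℝ) ≠ 0 := by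
      intro h
      apply hφ
      ext x
      have := congrFun (congrArg (fun (A : V →ₗ[ℝ] ℝ) => (A : V → ℝ)) h) x
      simpa using this
    obtain ⟨v, hv, hg⟩ := hsurj (φ : V →ₗ[ℝ] ℝ) hφ'
    refine ⟨v, hv, ?_⟩
    ext x
    rw [Lam_apply, hg]
    rfl
  rw [Linv, dif_pos hex]
  exact hex.choose_spec

theorem Linv_Lam (D : PseudoFinslerData V)
    (hinj : Set.InjOn (fun v => D.g v v) D.A)
    (hsurj : ∀ φ : V →ₗ[ℝ] ℝ, φ ≠ 0 → ∃ v ∈ D.A, D.g v v = φ)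
    {v : V} (hv : v ∈ D.A) : Linv D (Lam D v) = v := by
  have h1 := Linv_spec D hsurj (Lam_ne_zero D hv)
  exact hinj h1.1 hv (Lam_inj D h1.2)

theorem Linv_homog (D : PseudoFinslerData V)
    (hinj : Set.InjOn (fun v => D.g v v) D.A)
    (hsurj : ∀ φ : V →ₗ[ℝ] ℝ, φ ≠ 0 → ∃ v ∈ D.A, D.g v v = φ)
    {φ : V →L[ℝ] ℝ} (hφ : φ ≠ 0) {c : ℝ} (hc : 0 < c) :
    Linv D (c • φ) = c • Linv D φ := by
  obtain ⟨hv, hL⟩ := Linv_spec D hsurj hφ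
  have hcφ : c • φ ≠ 0 := smul_ne_zero (ne_of_gt hc) hφ
  obtain ⟨hv', hL'⟩ := Linv_spec D hsurj hcφ
  have h1 : Lam D (c • Linv D φ) = c • φ := by rw [Lam_homog D hv hc, hL]
  exact hinj hv' (D.A_cone _ hv c hc) (Lam_inj D (hL'.trans h1.symm))

theorem eventually_Linv_Lam (D : PseudoFinslerData V)
    (hinj : Set.InjOn (fun v => D.g v v) D.A)
    (hsurj : ∀ φ : V →ₗ[ℝ] ℝ, φ ≠ 0 → ∃ v ∈ D.A, D.g v v = φ)
    {v : V} (hv : v ∈ D.A) : ∀ᶠ x in nhds v, Linv D (Lam D x) = x := by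
  filter_upwards [D.A_open.mem_nhds hv] with x hx using Linv_Lam D hinj hsurj hx

theorem hasStrictFDerivAt_Lam (D : PseudoFinslerData V) {v : V} (hv : v ∈ D.A) :
    HasStrictFDerivAt (Lam D) ((ghE D hv : V →L[ℝ] (V →L[ℝ] ℝ))) v := by
  have hcd : ContDiffAt ℝ 1 (Lam D) v :=
    ((contDiffOn_Lam D).contDiffAt (D.A_open.mem_nhds hv)).of_le (by exact_mod_cast le_top)
  exact hcd.hasStrictFDerivAt' (hasFDerivAt_Lam' D hv) one_ne_zero

theorem hasFDerivAt_Linv (D : PseudoFinslerData V)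
    (hinj : Set.InjOn (fun v => D.g v v) D.A)
    (hsurj : ∀ φ : V →ₗ[ℝ] ℝ, φ ≠ 0 → ∃ v ∈ D.A, D.g v v = φ)
    {v : V} (hv : v ∈ D.A) :
    HasFDerivAt (Linv D) (((ghE D hv).symm : (V →L[ℝ] ℝ) →L[ℝ] V)) (Lam D v) :=
  ((hasStrictFDerivAt_Lam D hv).to_local_left_inverse
    (eventually_Linv_Lam D hinj hsurj hv)).hasFDerivAt

theorem contDiffAt_Linv (D : PseudoFinslerData V)
    (hinj : Set.InjOn (fun v => D.g v v) D.A)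
    (hsurj : ∀ φ : V →ₗ[ℝ] ℝ, φ ≠ 0 → ∃ v ∈ D.A, D.g v v = φ)
    {v : V} (hv : v ∈ D.A) : ContDiffAt ℝ 1 (Linv D) (Lam D v) := by
  have hcd : ContDiffAt ℝ 1 (Lam D) v :=
    ((contDiffOn_Lam D).contDiffAt (D.A_open.mem_nhds hv)).of_le (by exact_mod_cast le_top)
  have hloc := hcd.to_localInverse (f' := ghE D hv) (hasFDerivAt_Lam' D hv) one_ne_zero
  apply hloc.congr_of_eventuallyEq
  have := (hcd.hasStrictFDerivAt' (hasFDerivAt_Lam' D hv) one_ne_zero).localInverse_unique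
    (eventually_Linv_Lam D hinj hsurj hv)
  exact this

end FinDim

section Submersion

open Filter Set Topology

variable {V W : Type*} [NormedAddCommGroup V] [NormedSpace ℝ V] [FiniteDimensional ℝ V]
  [NormedAddCommGroup W] [NormedSpace ℝ W] [FiniteDimensional ℝ W]

/-- Pull-back of covectors along `π`, as a continuous linear map. -/
noncomputable def pullL (π : V →ₗ[ℝ] W) : (W →L[ℝ] ℝ) →L[ℝ] (V →L[ℝ] ℝ) :=
  (ContinuousLinearMap.compL ℝ V W ℝ).flip (LinearMap.toContinuousLinearMap π)

theorem pullL_apply (π : V →ₗ[ℝ] W) (ψ : W →L[ℝ] ℝ) (x : V) :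
    pullL π ψ x = ψ (π x) := rfl

noncomputable def vmap (D : PseudoFinslerData V) (π : V →ₗ[ℝ] W) (ψ : W →L[ℝ] ℝ) : V :=
  Linv D (pullL π ψ)

noncomputable def Pm (D : PseudoFinslerData V) (π : V →ₗ[ℝ] W) (ψ : W →L[ℝ] ℝ) : W :=
  LinearMap.toContinuousLinearMap π (vmap D π ψ)

theorem Pm_eq (D : PseudoFinslerData V) (π : V →ₗ[ℝ] W) (ψ : W →L[ℝ] ℝ) :
    Pm D π ψ = π (vmap D π ψ) := rfl

noncomputable def Rm (D : PseudoFinslerData V) (D' : PseudoFinslerData W) (π : V →ₗ[ℝ] W)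
    (ψ : W →L[ℝ] ℝ) : W →L[ℝ] ℝ :=
  Lam D' (Pm D π ψ)

noncomputable def Sm (D : PseudoFinslerData V) (D' : PseudoFinslerData W) (π : V →ₗ[ℝ] W)
    (ψ : W →L[ℝ] ℝ) : W →L[ℝ] ℝ :=
  Rm D D' π ψ - ψ

theorem dual_sep {x : W} (h : ∀ η : W →L[ℝ] ℝ, η x = 0) : x = 0 := by
  by_contra hx
  obtain ⟨g, -, hg⟩ := exists_dual_vector ℝ x (norm_ne_zero_iff.mpr hx)
  have : ‖x‖ = 0 := by
    have := h g
    rw [this] at hg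
    exact_mod_cast hg.symm
  exact hx (norm_eq_zero.mp this)

section Master

variable (D : PseudoFinslerData V) (D' : PseudoFinslerData W)
    (π : V →ₗ[ℝ] W) (hπ : Function.Surjective π)
    (hsub : ∀ v ∈ D.A, (∀ w ∈ LinearMap.ker π, D.g v v w = 0) →
      π v ∈ D'.A ∧ D.L v = D'.L (π v))
    (hinj : Set.InjOn (fun v => D.g v v) D.A)
    (hsurj : ∀ φ : V →ₗ[ℝ] ℝ, φ ≠ 0 → ∃ v ∈ D.A, D.g v v = φ)

include hπ in
theorem pullL_ne_zero {ψ : W →L[ℝ] ℝ} (hψ : ψ ≠ 0) : pullL π ψ ≠ 0 := by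
  intro h0
  apply hψ
  ext w
  obtain ⟨x, rfl⟩ := hπ w
  have := congrFun (congrArg (fun (A : V →L[ℝ] ℝ) => (A : V → ℝ)) h0) x
  simpa [pullL_apply] using this

include hπ hsurj in
theorem vmap_mem {ψ : W →L[ℝ] ℝ} (hψ : ψ ≠ 0) :
    vmap D π ψ ∈ D.A ∧ Lam D (vmap D π ψ) = pullL π ψ :=
  Linv_spec D hsurj (pullL_ne_zero π hπ hψ)

include hπ hsurj in
theorem vmap_horizontal {ψ : W →L[ℝ] ℝ} (hψ : ψ ≠ 0) :
    ∀ w ∈ LinearMap.ker π, D.g (vmap D π ψ) (vmap D π ψ) w = 0 := by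
  intro w hw
  have h1 : D.g (vmap D π ψ) (vmap D π ψ) w = Lam D (vmap D π ψ) w := rfl
  rw [h1, (vmap_mem D π hπ hsurj hψ).2, pullL_apply, LinearMap.mem_ker.mp hw, map_zero]

include hπ hsub hsurj in
theorem Pm_mem {ψ : W →L[ℝ] ℝ} (hψ : ψ ≠ 0) :
    Pm D π ψ ∈ D'.A ∧ D.L (vmap D π ψ) = D'.L (Pm D π ψ) := by
  rw [Pm_eq]
  exact hsub _ (vmap_mem D π hπ hsurj hψ).1 (vmap_horizontal D π hπ hsurj hψ)

include hπ hinj hsurj in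
theorem Pm_homog {ψ : W →L[ℝ] ℝ} (hψ : ψ ≠ 0) {c : ℝ} (hc : 0 < c) :
    Pm D π (c • ψ) = c • Pm D π ψ := by
  have hvm : vmap D π (c • ψ) = c • vmap D π ψ := by
    rw [vmap, map_smul, Linv_homog D hinj hsurj (pullL_ne_zero π hπ hψ) hc]
    rfl
  rw [Pm_eq, hvm, map_smul, Pm_eq]

include hπ hsub hinj hsurj in
theorem Sm_homog {ψ : W →L[ℝ] ℝ} (hψ : ψ ≠ 0) {c : ℝ} (hc : 0 < c) :
    Sm D D' π (c • ψ) = c • Sm D D' π ψ := by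
  have hRm : Rm D D' π (c • ψ) = c • Rm D D' π ψ := by
    rw [Rm, Pm_homog D π hπ hinj hsurj hψ hc,
      Lam_homog D' (Pm_mem D D' π hπ hsub hsurj hψ).1 hc]
    rfl
  rw [Sm, hRm, Sm, smul_sub]

include hπ hsub hinj hsurj in
theorem Sm_master {ψ : W →L[ℝ] ℝ} (hψ : ψ ≠ 0) :
    DifferentiableAt ℝ (Sm D D' π) ψ ∧
      fderiv ℝ (Sm D D' π) ψ (Sm D D' π ψ) = -(Sm D D' π ψ) := by
  obtain ⟨hv, hL⟩ := vmap_mem D π hπ hsurj hψ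
  have hu := (Pm_mem D D' π hπ hsub hsurj hψ).1
  set v := vmap D π ψ with hvdef
  -- derivative of vmap
  have hdLinv : HasFDerivAt (Linv D) (((ghE D hv).symm : (V →L[ℝ] ℝ) →L[ℝ] V)) (pullL π ψ) := by
    rw [← hL]
    exact hasFDerivAt_Linv D hinj hsurj hv
  have hdvm : HasFDerivAt (vmap D π)
      ((((ghE D hv).symm : (V →L[ℝ] ℝ) →L[ℝ] V)).comp (pullL π)) ψ :=
    hdLinv.comp ψ (pullL π).hasFDerivAt
  set DP : (W →L[ℝ] ℝ) →L[ℝ] W :=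
    (LinearMap.toContinuousLinearMap π).comp
      ((((ghE D hv).symm : (V →L[ℝ] ℝ) →L[ℝ] V)).comp (pullL π)) with hDPdef
  have hdP : HasFDerivAt (Pm D π) DP ψ :=
    (LinearMap.toContinuousLinearMap π).hasFDerivAt.comp ψ hdvm
  have hDPapp : ∀ η : W →L[ℝ] ℝ, DP η = π ((ghE D hv).symm (pullL π η)) := fun η => rfl
  -- symmetry of DP
  have hsymm : ∀ η ζ : W →L[ℝ] ℝ, ζ (DP η) = η (DP ζ) := by
    intro η ζ
    set a := (ghE D hv).symm (pullL π ζ) with hadef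
    set b := (ghE D hv).symm (pullL π η) with hbdef
    have ha : (ghE D hv) a = pullL π ζ := (ghE D hv).apply_symm_apply _
    have hb : (ghE D hv) b = pullL π η := (ghE D hv).apply_symm_apply _
    calc ζ (DP η) = (pullL π ζ) b := (pullL_apply π ζ b).symm
      _ = ((ghE D hv) a) b := by rw [ha]
      _ = D.g v a b := by rw [ghE_apply, gh_apply D hv]
      _ = D.g v b a := D.g_symm v hv a b
      _ = ((ghE D hv) b) a := by rw [ghE_apply, gh_apply D hv]
      _ = (pullL π η) a := by rw [hb]
      _ = η (DP ζ) := pullL_apply π η a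
  -- Euler for DP
  have hEv : (ghE D hv) v = Lam D v := by
    ext x
    rw [ghE_apply, gh_apply D hv, Lam_apply]
  have hvsym : (ghE D hv).symm (pullL π ψ) = v := by
    rw [← hL, ← hEv, (ghE D hv).symm_apply_apply]
  have hEulP : DP ψ = Pm D π ψ := by
    rw [hDPapp, hvsym, Pm_eq]
  -- two computations of the derivative of G
  have hdG1 : HasFDerivAt (fun ψ' => D.L (vmap D π ψ'))
      ((fderiv ℝ D.L v).comp
        ((((ghE D hv).symm : (V →L[ℝ] ℝ) →L[ℝ] V)).comp (pullL π))) ψ :=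
    (hasFDerivAt_L D hv).comp ψ hdvm
  have hopen : {x : W →L[ℝ] ℝ | x ≠ 0} ∈ 𝓝 ψ := isOpen_compl_singleton.mem_nhds hψ
  have heqG : (fun ψ' => D.L (vmap D π ψ')) =ᶠ[𝓝 ψ] (fun ψ' => D'.L (Pm D π ψ')) := by
    filter_upwards [hopen] with ψ' hψ' using (Pm_mem D D' π hπ hsub hsurj hψ').2
  have hdG2 : HasFDerivAt (fun ψ' => D'.L (Pm D π ψ'))
      ((fderiv ℝ D'.L (Pm D π ψ)).comp DP) ψ :=
    (hasFDerivAt_L D' hu).comp ψ hdP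
  have huniq := (hdG2.congr_of_eventuallyEq heqG).unique hdG1
  have hf'v : ∀ x, fderiv ℝ D.L v x = 2 * Lam D v x := by
    intro x
    have h1 : Lam D v x = 2⁻¹ * fderiv ℝ D.L v x := by
      rw [Lam_eq D hv]
      simp
    rw [h1]; ring
  have hf'u : ∀ x, fderiv ℝ D'.L (Pm D π ψ) x = 2 * Lam D' (Pm D π ψ) x := by
    intro x
    have h1 : Lam D' (Pm D π ψ) x = 2⁻¹ * fderiv ℝ D'.L (Pm D π ψ) x := by
      rw [Lam_eq D' hu]
      simp
    rw [h1]; ring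
  -- the key identity (I)
  have keyI : ∀ η : W →L[ℝ] ℝ, η (Pm D π ψ) = Rm D D' π ψ (DP η) := by
    intro η
    have h1 := congrFun (congrArg
      (fun (A : (W →L[ℝ] ℝ) →L[ℝ] ℝ) => (A : (W →L[ℝ] ℝ) → ℝ)) huniq) η
    simp only [ContinuousLinearMap.coe_comp', Function.comp_apply,
      ContinuousLinearEquiv.coe_coe] at h1
    set b := (ghE D hv).symm (pullL π η) with hbdef
    have hb : (ghE D hv) b = pullL π η := (ghE D hv).apply_symm_apply _
    have h2 : fderiv ℝ D.L v b = 2 * η (Pm D π ψ) := by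
      rw [hf'v]
      congr 1
      calc Lam D v b = D.g v v b := rfl
        _ = D.g v b v := D.g_symm v hv v b
        _ = ((ghE D hv) b) v := by rw [ghE_apply, gh_apply D hv]
        _ = (pullL π η) v := by rw [hb]
        _ = η (π v) := pullL_apply π η v
        _ = η (Pm D π ψ) := by rw [Pm_eq]
    have h3 : fderiv ℝ D'.L (Pm D π ψ) (DP η) = 2 * Rm D D' π ψ (DP η) := by
      rw [hf'u]; rfl
    rw [h3, h2] at h1
    linarith
  -- DP kills Sm ψ
  have hDPS : DP (Sm D D' π ψ) = 0 := by
    apply dual_sep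
    intro η
    have h1 : η (DP (Sm D D' π ψ)) = (Sm D D' π ψ) (DP η) := hsymm _ η
    have h2 : (Sm D D' π ψ) (DP η) = Rm D D' π ψ (DP η) - ψ (DP η) := by
      rw [Sm]; simp
    have h3 : ψ (DP η) = η (DP ψ) := hsymm η ψ
    rw [h1, h2, h3, hEulP, ← keyI η, sub_self]
  -- derivative of Sm
  have hdR : HasFDerivAt (Rm D D' π) ((gh D' (Pm D π ψ)).comp DP) ψ :=
    (hasFDerivAt_Lam D' hu).comp ψ hdP
  have hdS : HasFDerivAt (Sm D D' π)
      ((gh D' (Pm D π ψ)).comp DP - ContinuousLinearMap.id ℝ (W →L[ℝ] ℝ)) ψ :=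
    hdR.sub (hasFDerivAt_id ψ)
  refine ⟨hdS.differentiableAt, ?_⟩
  rw [hdS.fderiv]
  have : ((gh D' (Pm D π ψ)).comp DP - ContinuousLinearMap.id ℝ (W →L[ℝ] ℝ)) (Sm D D' π ψ)
      = gh D' (Pm D π ψ) (DP (Sm D D' π ψ)) - Sm D D' π ψ := by
    simp
  rw [this, hDPS, map_zero, zero_sub]

include hπ hsub hinj hsurj in
theorem Sm_euler {ψ : W →L[ℝ] ℝ} (hψ : ψ ≠ 0) :
    fderiv ℝ (Sm D D' π) ψ ψ = Sm D D' π ψ := by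
  have hdiff := (Sm_master D D' π hπ hsub hinj hsurj hψ).1
  have hline : HasDerivAt (fun c : ℝ => c • ψ) ψ 1 := by
    simpa using (hasDerivAt_id (1:ℝ)).smul_const ψ
  have h1 : HasDerivAt (fun c : ℝ => Sm D D' π (c • ψ)) (fderiv ℝ (Sm D D' π) ψ ψ) 1 := by
    have := hdiff.hasFDerivAt.comp_hasDerivAt_of_eq 1 hline (by simp)
    simpa [Function.comp_def] using this
  have h2 : HasDerivAt (fun c : ℝ => c • Sm D D' π ψ) (Sm D D' π ψ) 1 := by
    simpa using (hasDerivAt_id (1:ℝ)).smul_const (Sm D D' π ψ)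
  have heq : (fun c : ℝ => Sm D D' π (c • ψ)) =ᶠ[𝓝 (1:ℝ)]
      (fun c : ℝ => c • Sm D D' π ψ) := by
    filter_upwards [eventually_gt_nhds zero_lt_one] with c hc using
      Sm_homog D D' π hπ hsub hinj hsurj hψ hc
  exact (h1.congr_of_eventuallyEq heq.symm).unique h2

include hπ hinj hsurj in
theorem vmap_contDiffAt {ψ : W →L[ℝ] ℝ} (hψ : ψ ≠ 0) :
    ContDiffAt ℝ 1 (vmap D π) ψ := by
  obtain ⟨hv, hL⟩ := vmap_mem D π hπ hsurj hψ
  have c1 : ContDiffAt ℝ 1 (fun ψ' : W →L[ℝ] ℝ => pullL π ψ') ψ :=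
    (pullL π).contDiff.contDiffAt
  have c2 : ContDiffAt ℝ 1 (Linv D) (pullL π ψ) := by
    rw [← hL]; exact contDiffAt_Linv D hinj hsurj hv
  exact c2.comp ψ c1

include hπ hsub hinj hsurj in
theorem Sm_contDiffAt {ψ : W →L[ℝ] ℝ} (hψ : ψ ≠ 0) :
    ContDiffAt ℝ 1 (Sm D D' π) ψ := by
  have hu := (Pm_mem D D' π hπ hsub hsurj hψ).1
  have cP : ContDiffAt ℝ 1 (Pm D π) ψ :=
    ((LinearMap.toContinuousLinearMap π).contDiff.contDiffAt).comp ψ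
      (vmap_contDiffAt D π hπ hinj hsurj hψ)
  have cLam : ContDiffAt ℝ 1 (Lam D') (Pm D π ψ) :=
    ((contDiffOn_Lam D').contDiffAt (D'.A_open.mem_nhds hu)).of_le (by exact_mod_cast le_top)
  have cR : ContDiffAt ℝ 1 (Rm D D' π) ψ := cLam.comp ψ cP
  exact cR.sub contDiffAt_id

include hπ hsub hinj hsurj in
theorem Sm_fderiv_continuousOn :
    ContinuousOn (fderiv ℝ (Sm D D' π)) {x : W →L[ℝ] ℝ | x ≠ 0} := by
  have h1 : ContDiffOn ℝ 1 (Sm D D' π) {x : W →L[ℝ] ℝ | x ≠ 0} := fun ψ hψ =>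
    (Sm_contDiffAt D D' π hπ hsub hinj hsurj hψ).contDiffWithinAt
  exact h1.continuousOn_fderiv_of_isOpen isOpen_ne le_rfl

include hπ hsub hinj hsurj in
set_option maxHeartbeats 2000000 in
theorem Sm_zero (hinj' : Set.InjOn (fun u => D'.g u u) D'.A)
    {ψ : W →L[ℝ] ℝ} (hψ : ψ ≠ 0) : Sm D D' π ψ = 0 := by
  by_contra hS0ne
  set S0 := Sm D D' π ψ with hS0def
  by_cases hcol : ∃ μ : ℝ, 0 < μ ∧ ψ = μ • S0
  · -- collinear case, pure Euler contradiction
    obtain ⟨μ, hμ, hcoleq⟩ := hcol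
    have h1 := Sm_euler D D' π hπ hsub hinj hsurj hψ
    have h2 := (Sm_master D D' π hπ hsub hinj hsurj hψ).2
    have h2' : fderiv ℝ (Sm D D' π) ψ S0 = -S0 := by rw [hS0def]; exact h2
    have h3 : S0 = -(μ • S0) := by
      calc S0 = fderiv ℝ (Sm D D' π) ψ ψ := h1.symm
        _ = fderiv ℝ (Sm D D' π) ψ (μ • S0) := by rw [← hcoleq]
        _ = μ • fderiv ℝ (Sm D D' π) ψ S0 := by rw [map_smul]
        _ = μ • (-S0) := by rw [h2']
        _ = -(μ • S0) := smul_neg μ S0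
    have h4 : (1 + μ) • S0 = 0 := by
      rw [add_smul, one_smul]
      rw [eq_neg_iff_add_eq_zero] at h3
      linear_combination (norm := module) h3
    have h5 : S0 = 0 := by
      have h6 : (1 + μ) ≠ 0 := by linarith
      exact (smul_eq_zero.mp h4).resolve_left h6
    exact hS0ne h5
  · -- generic case: backward ray propagation plus a limit argument
    have hray : ∀ s : ℝ, 0 ≤ s → ψ - s • S0 ≠ 0 := by
      intro s hs h0
      have heq : ψ = s • S0 := by
        rw [sub_eq_zero] at h0; exact h0
      rcases eq_or_lt_of_le hs with h | h
      · apply hψ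
        rw [heq, ← h, zero_smul]
      · exact hcol ⟨s, h, heq⟩
    -- propagation along the ray via Gronwall's inequality
    have hprop : ∀ T : ℝ, 0 ≤ T → Sm D D' π (ψ - T • S0) = (1 + T) • S0 := by
      intro T hT
      set c : ℝ → (W →L[ℝ] ℝ) := fun t => ψ - t • S0 with hcdef
      set B : ℝ → (W →L[ℝ] ℝ) := fun t => Sm D D' π (c t) - (1 + t) • S0 with hBdef
      have hc_cont : Continuous c := by
        apply continuous_const.sub
        exact (continuous_id.smul continuous_const)
      have hcne : ∀ t, 0 ≤ t → c t ≠ 0 := fun t ht => hray t ht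
      -- bound on the derivative of Sm along the segment
      have hfd_cont : ContinuousOn (fun t => fderiv ℝ (Sm D D' π) (c t)) (Icc 0 T) := by
        apply (Sm_fderiv_continuousOn D D' π hπ hsub hinj hsurj).comp
          hc_cont.continuousOn
        intro t ht
        exact hcne t ht.1
      obtain ⟨M, hM⟩ := (isCompact_Icc (a := (0:ℝ)) (b := T)).exists_bound_of_continuousOn
        (f := fun t => fderiv ℝ (Sm D D' π) (c t)) hfd_cont
      set K : ℝ := 1 + max M 0 with hKdef
      have hK0 : 0 ≤ K := by
        have := le_max_right M 0
        simp only [hKdef]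
        linarith
      -- the function B satisfies a linear differential inequality
      have hBcont : ContinuousOn B (Icc 0 T) := by
        apply ContinuousOn.sub
        · intro t ht
          have h1 : ContinuousAt (Sm D D' π) (c t) :=
            (Sm_contDiffAt D D' π hπ hsub hinj hsurj (hcne t ht.1)).continuousAt
          exact (h1.comp hc_cont.continuousAt).continuousWithinAt
        · exact ((continuous_const.add continuous_id).smul continuous_const).continuousOn
      have hB0 : B 0 = 0 := by
        simp only [hBdef, hcdef]
        rw [zero_smul, sub_zero, add_zero, one_smul, ← hS0def, sub_self]
      have hBderiv : ∀ t ∈ Ico 0 T, HasDerivWithinAt B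
          ((1 + t)⁻¹ • (B t + fderiv ℝ (Sm D D' π) (c t) (B t))) (Ici t) t := by
        intro t ht
        have h1t : (0:ℝ) < 1 + t := by linarith [ht.1]
        have hc' : HasDerivAt c (-S0) t := by
          have := ((hasDerivAt_id t).smul_const S0).const_sub ψ
          simpa using this
        have hSdiff := (Sm_master D D' π hπ hsub hinj hsurj (hcne t ht.1)).1
        have hmaster := (Sm_master D D' π hπ hsub hinj hsurj (hcne t ht.1)).2
        set Dt := fderiv ℝ (Sm D D' π) (c t) with hDtdef
        have hSc : HasDerivAt (fun t' => Sm D D' π (c t')) (Dt (-S0)) t := by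
          have := hSdiff.hasFDerivAt.comp_hasDerivAt t hc'
          simpa [Function.comp_def] using this
        have hlin : HasDerivAt (fun t' : ℝ => (1 + t') • S0) S0 t := by
          have := ((hasDerivAt_id t).const_add (1:ℝ)).smul_const S0
          simpa using this
        have hBd : HasDerivAt B (Dt (-S0) - S0) t := hSc.sub hlin
        have hSm_ct : Sm D D' π (c t) = B t + (1 + t) • S0 := by
          simp only [hBdef]
          abel
        have hmaster' : Dt (B t) + (1 + t) • Dt S0 = -(B t) - (1 + t) • S0 := by
          have := hmaster
          rw [hSm_ct] at this
          rw [map_add, map_smul] at this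
          rw [this]
          abel
        have hkey : Dt (-S0) - S0 = (1 + t)⁻¹ • (B t + Dt (B t)) := by
          have h2 : (1 + t) • (Dt (-S0) - S0) = B t + Dt (B t) := by
            rw [map_neg]
            have h3 : (1 + t) • (-Dt S0 - S0) = -((1 + t) • Dt S0) - (1 + t) • S0 := by
              rw [smul_sub, smul_neg]
            rw [h3]
            have h4 : (1 + t) • Dt S0 = -(B t) - (1 + t) • S0 - Dt (B t) := by
              linear_combination (norm := module) hmaster'
            rw [h4]
            abel
          rw [← h2, smul_smul, inv_mul_cancel₀ (ne_of_gt h1t), one_smul]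
        rw [← hkey]
        exact hBd.hasDerivWithinAt
      have hbound : ∀ t ∈ Ico 0 T,
          ‖(1 + t)⁻¹ • (B t + fderiv ℝ (Sm D D' π) (c t) (B t))‖ ≤ K * ‖B t‖ + 0 := by
        intro t ht
        have h1t : (0:ℝ) < 1 + t := by linarith [ht.1]
        have hinv1 : (1 + t)⁻¹ ≤ 1 := inv_le_one_of_one_le₀ (by linarith [ht.1])
        have hMt := hM t (Ico_subset_Icc_self ht)
        have h5 : ‖fderiv ℝ (Sm D D' π) (c t) (B t)‖ ≤ max M 0 * ‖B t‖ := by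
          calc ‖fderiv ℝ (Sm D D' π) (c t) (B t)‖
              ≤ ‖fderiv ℝ (Sm D D' π) (c t)‖ * ‖B t‖ := ContinuousLinearMap.le_opNorm _ _
            _ ≤ max M 0 * ‖B t‖ := by
                apply mul_le_mul_of_nonneg_right _ (norm_nonneg _)
                exact le_trans hMt (le_max_left M 0)
        calc ‖(1 + t)⁻¹ • (B t + fderiv ℝ (Sm D D' π) (c t) (B t))‖
            ≤ ‖(1 + t)⁻¹‖ * ‖B t + fderiv ℝ (Sm D D' π) (c t) (B t)‖ :=
              ContinuousLinearMap.opNorm_smul_le _ _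
          _ ≤ 1 * ‖B t + fderiv ℝ (Sm D D' π) (c t) (B t)‖ := by
              apply mul_le_mul_of_nonneg_right _ (norm_nonneg _)
              rw [Real.norm_eq_abs, abs_of_pos (inv_pos.mpr h1t)]
              exact hinv1
          _ = ‖B t + fderiv ℝ (Sm D D' π) (c t) (B t)‖ := one_mul _
          _ ≤ ‖B t‖ + ‖fderiv ℝ (Sm D D' π) (c t) (B t)‖ := norm_add_le _ _
          _ ≤ ‖B t‖ + max M 0 * ‖B t‖ := by linarith [h5]
          _ = K * ‖B t‖ + 0 := by rw [hKdef]; ring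
      have hgron := norm_le_gronwallBound_of_norm_deriv_right_le (δ := 0) (K := K) (ε := 0)
        hBcont hBderiv (by rw [hB0]; simp) hbound
      have hBT := hgron T ⟨hT, le_refl T⟩
      rw [gronwallBound_ε0_δ0] at hBT
      have hBT0 : B T = 0 := by
        have := norm_le_zero_iff.mp (by simpa using hBT)
        exact this
      have := hBT0
      simp only [hBdef, hcdef] at this
      rw [sub_eq_zero] at this
      exact this
    -- the projection is constant along the ray
    have hPconst : ∀ T : ℝ, 0 ≤ T → Pm D π (ψ - T • S0) = Pm D π ψ := by
      intro T hT
      have h1 : Rm D D' π (ψ - T • S0) = Rm D D' π ψ := by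
        have h2 : Sm D D' π (ψ - T • S0) = (1 + T) • S0 := hprop T hT
        have h3 : Rm D D' π (ψ - T • S0) = Sm D D' π (ψ - T • S0) + (ψ - T • S0) := by
          rw [Sm]; abel
        have h4 : Rm D D' π ψ = S0 + ψ := by
          rw [hS0def, Sm]; abel
        rw [h3, h2, h4]
        module
      have hu1 := (Pm_mem D D' π hπ hsub hsurj (hray T hT)).1
      have hu2 := (Pm_mem D D' π hπ hsub hsurj hψ).1
      exact hinj' hu1 hu2 (Lam_inj D' h1)
    -- limit argument: contradiction with `0 ∉ D'.A`
    have hS0n : -S0 ≠ 0 := neg_ne_zero.mpr hS0ne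
    have hPm_neg := (Pm_mem D D' π hπ hsub hsurj hS0n).1
    have hlim : Pm D π (-S0) = 0 := by
      have hφ : ∀ n : ℕ, ((n:ℝ)⁻¹ • ψ - S0 : W →L[ℝ] ℝ) ≠ 0 ∨ n = 0 := by
        intro n
        rcases Nat.eq_zero_or_pos n with h | h
        · right; exact h
        · left
          have hn0 : (0:ℝ) < (n:ℝ) := by exact_mod_cast h
          have : (n:ℝ)⁻¹ • ψ - S0 = (n:ℝ)⁻¹ • (ψ - (n:ℝ) • S0) := by
            rw [smul_sub, smul_smul, inv_mul_cancel₀ (ne_of_gt hn0), one_smul]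
          rw [this]
          exact smul_ne_zero (inv_ne_zero (ne_of_gt hn0)) (hray (n:ℝ) (le_of_lt hn0))
      have htend1 : Filter.Tendsto (fun n : ℕ => ((n:ℝ)⁻¹ • ψ - S0 : W →L[ℝ] ℝ))
          Filter.atTop (𝓝 (-S0)) := by
        have h1 : Filter.Tendsto (fun n : ℕ => (n:ℝ)⁻¹) Filter.atTop (𝓝 0) :=
          tendsto_inv_atTop_nhds_zero_nat
        have h2 := h1.smul_const ψ
        rw [zero_smul] at h2
        have h3 := h2.sub_const S0
        rw [zero_sub] at h3
        exact h3
      have hcont_vm : ContinuousAt (vmap D π) (-S0) :=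
        (vmap_contDiffAt D π hπ hinj hsurj hS0n).continuousAt
      have htend2 : Filter.Tendsto (fun n : ℕ => vmap D π ((n:ℝ)⁻¹ • ψ - S0))
          Filter.atTop (𝓝 (vmap D π (-S0))) := hcont_vm.tendsto.comp htend1
      have htend3 : Filter.Tendsto (fun n : ℕ => Pm D π ((n:ℝ)⁻¹ • ψ - S0))
          Filter.atTop (𝓝 (Pm D π (-S0))) := by
        have hπcont : Continuous (LinearMap.toContinuousLinearMap π) :=
          (LinearMap.toContinuousLinearMap π).continuous
        exact (hπcont.continuousAt.tendsto.comp htend2)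
      have htend4 : Filter.Tendsto (fun n : ℕ => Pm D π ((n:ℝ)⁻¹ • ψ - S0))
          Filter.atTop (𝓝 0) := by
        apply Filter.Tendsto.congr' (f₁ := fun n : ℕ => (n:ℝ)⁻¹ • Pm D π ψ)
        · filter_upwards [Filter.eventually_ge_atTop 1] with n hn
          have hn0 : (0:ℝ) < (n:ℝ) := by exact_mod_cast hn
          have heq1 : ((n:ℝ)⁻¹ • ψ - S0 : W →L[ℝ] ℝ) = (n:ℝ)⁻¹ • (ψ - (n:ℝ) • S0) := by
            rw [smul_sub, smul_smul, inv_mul_cancel₀ (ne_of_gt hn0), one_smul]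
          rw [heq1, Pm_homog D π hπ hinj hsurj (hray (n:ℝ) (le_of_lt hn0))
            (inv_pos.mpr hn0), hPconst (n:ℝ) (le_of_lt hn0)]
        · have h1 : Filter.Tendsto (fun n : ℕ => (n:ℝ)⁻¹) Filter.atTop (𝓝 0) :=
            tendsto_inv_atTop_nhds_zero_nat
          have h2 := h1.smul_const (Pm D π ψ)
          rwa [zero_smul] at h2
      exact tendsto_nhds_unique htend3 htend4
    exact D'.A_ne_zero _ hPm_neg hlim

end Master

end Submersion

end PFAux

open PFAux

/-- if `A = V ∖ {0}`, the Legendre map `ℒ(v) = g_v(v,·)` is a bijection from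
`V ∖ {0}` onto `V* ∖ {0}`, and the Legendre map of the base is injective on `Ã`, then every
`vt ∈ Ã` has exactly one horizontal lift `v ∈ V ∖ {0}` with `π v = vt`. -/
theorem stmt2 {V W : Type*}
    [NormedAddCommGroup V] [NormedSpace ℝ V] [FiniteDimensional ℝ V]
    [NormedAddCommGroup W] [NormedSpace ℝ W] [FiniteDimensional ℝ W]
    (D : PseudoFinslerData V) (D' : PseudoFinslerData W)
    (π : V →ₗ[ℝ] W) (hπ : Function.Surjective π)
    (hsub : ∀ v ∈ D.A, (∀ w ∈ LinearMap.ker π, D.g v v w = 0) →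
      π v ∈ D'.A ∧ D.L v = D'.L (π v))
    (hA : D.A = {v : V | v ≠ 0})
    (hinj : Set.InjOn (fun v => D.g v v) D.A)
    (hne : ∀ v ∈ D.A, D.g v v ≠ 0)
    (hsurj : ∀ φ : V →ₗ[ℝ] ℝ, φ ≠ 0 → ∃ v ∈ D.A, D.g v v = φ)
    (hinj' : Set.InjOn (fun u => D'.g u u) D'.A) :
    ∀ vt ∈ D'.A, ∃! v : V, v ∈ D.A ∧
      (∀ w ∈ LinearMap.ker π, D.g v v w = 0) ∧ π v = vt := by
  intro vt hvt
  have hSz : ∀ ψ : W →L[ℝ] ℝ, ψ ≠ 0 → Sm D D' π ψ = 0 :=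
    fun ψ hψ => Sm_zero D D' π hπ hsub hinj hsurj hinj' hψ
  have hψstar : Lam D' vt ≠ 0 := Lam_ne_zero D' hvt
  obtain ⟨hvA, hvL⟩ := vmap_mem D π hπ hsurj hψstar
  have hhor := vmap_horizontal D π hπ hsurj hψstar
  have hPmem := Pm_mem D D' π hπ hsub hsurj hψstar
  have hR : Lam D' (Pm D π (Lam D' vt)) = Lam D' vt := by
    have h0 : Sm D D' π (Lam D' vt) = 0 := hSz _ hψstar
    rw [Sm, sub_eq_zero] at h0
    exact h0
  have hPvt : Pm D π (Lam D' vt) = vt := hinj' hPmem.1 hvt (Lam_inj D' hR)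
  refine ⟨vmap D π (Lam D' vt), ⟨hvA, hhor, ?_⟩, ?_⟩
  · rw [← Pm_eq]
    exact hPvt
  · rintro v ⟨hv, hhorv, hπv⟩
    obtain ⟨σ, hσ⟩ := π.exists_rightInverse_of_surjective (LinearMap.range_eq_top.mpr hπ)
    set ψ : W →L[ℝ] ℝ := LinearMap.toContinuousLinearMap ((D.g v v).comp σ) with hψdef
    have hLam : Lam D v = pullL π ψ := by
      ext x
      have h1 : pullL π ψ x = D.g v v (σ (π x)) := rfl
      have h2 : σ (π x) - x ∈ LinearMap.ker π := by
        rw [LinearMap.mem_ker, map_sub, sub_eq_zero]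
        exact LinearMap.congr_fun hσ (π x)
      have h3 : D.g v v (σ (π x) - x) = 0 := hhorv _ h2
      rw [map_sub, sub_eq_zero] at h3
      rw [Lam_apply, h1, ← h3]
    have hψne : ψ ≠ 0 := by
      intro h0
      apply hne v hv
      have h1 : Lam D v = 0 := by rw [hLam, h0, map_zero]
      ext x
      have := congrFun (congrArg (fun (A : V →L[ℝ] ℝ) => (A : V → ℝ)) h1) x
      simpa [Lam_apply] using this
    have hveq : v = vmap D π ψ := by
      have h1 := Linv_Lam D hinj hsurj hv
      rw [hLam] at h1
      exact h1.symm
    have hPψ : Pm D π ψ = vt := by rw [Pm_eq, ← hveq, hπv]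
    have hRψ : Lam D' (Pm D π ψ) = ψ := by
      have h0 : Sm D D' π ψ = 0 := hSz ψ hψne
      rw [Sm, sub_eq_zero] at h0
      exact h0
    have hψeq : ψ = Lam D' vt := by rw [← hRψ, hPψ]
    rw [hveq, hψeq]
end

section
/- For every smooth anisotropic vector field 𝒳 : A → ℝⁿ, every (p,v) ∈ A and all e, h ∈ ℝⁿ, the fiber derivative of the covariant derivative satisfies d/dt|_{t=0} ∇^{(p,v+th)}_e 𝒳 = P_{(p,v)}(e, 𝒳(p,v), h) + (∇_e(∂̇𝒳))_{(p,v)}(h) − (∂̇𝒳)_{(p,v)}(P_{(p,v)}(e,v,h)), where (∇_e(∂̇𝒳))_{(p,v)}(h) := ∇^{(p,v)}_e[(q,u) ↦ (∂̇𝒳)_{(q,u)}(h)] − (∂̇𝒳)_{(p,v)}(Γ_{(p,v)}(e,h)) is the covariant derivative of the (1,1)-anisotropic tensor ∂̇𝒳. -/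
/-- A pseudo-Finsler metric in a chart: an open set `Ω ⊆ E`, an open set
`A ⊆ Ω × (E ∖ {0})` with conic fibers, a smooth positively `2`-homogeneous `L` on `A`
and its fundamental tensor `g`, given by the second fiber derivative of `L`, required
to be symmetric and nondegenerate at every point of `A`. -/
structure PseudoFinslerChart (E : Type*) [NormedAddCommGroup E] [NormedSpace ℝ E] where
  Ω : Set E
  A : Set (E × E)
  L : E × E → ℝ
  g : E × E → E →ₗ[ℝ] E →ₗ[ℝ] ℝ
  Ω_open : IsOpen Ω
  A_open : IsOpen A
  A_sub : ∀ pv ∈ A, pv.1 ∈ Ω ∧ pv.2 ≠ 0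
  A_cone : ∀ pv ∈ A, ∀ c : ℝ, 0 < c → (pv.1, c • pv.2) ∈ A
  L_smooth : ContDiffOn ℝ (⊤ : ℕ∞) L A
  L_homog : ∀ pv ∈ A, ∀ c : ℝ, 0 < c → L (pv.1, c • pv.2) = c ^ 2 * L pv
  g_def : ∀ pv ∈ A, ∀ e h : E,
    g pv e h = (1 / 2) * deriv (fun s : ℝ =>
      deriv (fun t : ℝ => L (pv.1, pv.2 + s • e + t • h)) 0) 0
  g_symm : ∀ pv ∈ A, ∀ e h : E, g pv e h = g pv h e
  g_nondeg : ∀ pv ∈ A, ∀ e : E, (∀ h : E, g pv e h = 0) → e = 0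

/-- The Cartan tensor of a pseudo-Finsler metric in a chart. -/
noncomputable def PseudoFinslerChart.Cartan {E : Type*} [NormedAddCommGroup E]
    [NormedSpace ℝ E] (F : PseudoFinslerChart E) (pv : E × E) (b e h : E) : ℝ :=
  (1 / 4) * deriv (fun r : ℝ => deriv (fun s : ℝ =>
    deriv (fun t : ℝ => F.L (pv.1, pv.2 + r • b + s • e + t • h)) 0) 0) 0

/-- The fiber derivative `(∂̇𝒳)_{(p,v)}(h) = d/dt|₀ 𝒳(p, v + t h)` of an anisotropic
vector field. -/
noncomputable def fiberDeriv {E : Type*} [NormedAddCommGroup E] [NormedSpace ℝ E]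
    (𝒳 : E × E → E) (pv : E × E) (h : E) : E :=
  deriv (fun t : ℝ => 𝒳 (pv.1, pv.2 + t • h)) 0

/-- The covariant derivative `∇^{(p,v)}_e 𝒳` of an anisotropic vector field with respect
to an anisotropic connection `Γ`. -/
noncomputable def covDeriv {E : Type*} [NormedAddCommGroup E] [NormedSpace ℝ E]
    (Γ : E × E → E →ₗ[ℝ] E →ₗ[ℝ] E) (𝒳 : E × E → E) (pv : E × E) (e : E) : E :=
  fderiv ℝ (fun q => 𝒳 (q, pv.2)) pv.1 e + Γ pv e (𝒳 pv)
    - fiberDeriv 𝒳 pv (Γ pv e pv.2)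

/-- The vertical derivative `P_{(p,v)}(e,h,b) = d/dt|₀ Γ_{(p,v+tb)}(e,h)` of an
anisotropic connection. -/
noncomputable def vertDeriv {E : Type*} [NormedAddCommGroup E] [NormedSpace ℝ E]
    (Γ : E × E → E →ₗ[ℝ] E →ₗ[ℝ] E) (pv : E × E) (e h b : E) : E :=
  deriv (fun t : ℝ => Γ (pv.1, pv.2 + t • b) e h) 0

/-!
On `A` the fiber derivative is `(∂̇𝒳)(h) = D𝒳(0, h)`, so both sides are expressions in `D𝒳`
and `D²𝒳` at `(p, v)`. Differentiating `∇^{(p,v+th)}_e 𝒳` term by term, the Leibniz rule for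
`t ↦ Γ_{(p,v+th)}(e, w(t))` produces the `P`-terms and the `Γ_{(p,v)}(e, ·)`-terms; it applies
because in finite dimension a family of linear maps that is differentiable after evaluation is
differentiable as a family of continuous linear maps. What is left are the mixed second
derivatives `D²𝒳((0,h), (e,0))` and `D²𝒳((0,h), (0,Γ(e,v)))`, which match the two derivatives of
`∂̇𝒳(h)` in `∇_e(∂̇𝒳)` by the symmetry of `D²𝒳`.
-/
open Filter Topology

section FiberLine

variable {E E' G : Type*} [NormedAddCommGroup E] [NormedSpace ℝ E]
  [NormedAddCommGroup E'] [NormedSpace ℝ E'] [NormedAddCommGroup G] [NormedSpace ℝ G]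

theorem hasDerivAt_line (v h : E) : HasDerivAt (fun t : ℝ => v + t • h) h 0 := by
  simpa using ((hasDerivAt_id (0 : ℝ)).smul_const h).const_add v

theorem hasDerivAt_fiberLine (p : E') (v h : E) :
    HasDerivAt (fun t : ℝ => (p, v + t • h)) ((0 : E'), h) 0 :=
  (hasDerivAt_const 0 p).prodMk (hasDerivAt_line v h)

theorem tendsto_fiberLine (p : E') (v h : E) :
    Tendsto (fun t : ℝ => (p, v + t • h)) (𝓝 0) (𝓝 (p, v)) := by
  simpa using (hasDerivAt_fiberLine p v h).continuousAt.tendsto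

theorem DifferentiableAt.hasDerivAt_comp_fiberLine {f : E' × E → G} {p : E'} {v : E}
    (hf : DifferentiableAt ℝ f (p, v)) (h : E) :
    HasDerivAt (fun t : ℝ => f (p, v + t • h)) (fderiv ℝ f (p, v) (0, h)) 0 := by
  have hf' : HasFDerivAt f (fderiv ℝ f (p, v)) (p, v + (0 : ℝ) • h) := by
    simpa using hf.hasFDerivAt
  exact hf'.comp_hasDerivAt 0 (hasDerivAt_fiberLine p v h)

end FiberLine

section LinearMapFamily

variable {E F : Type*} [NormedAddCommGroup E] [NormedSpace ℝ E] [FiniteDimensional ℝ E]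
  [NormedAddCommGroup F] [NormedSpace ℝ F] {B : ℝ → E →ₗ[ℝ] F} {t₀ : ℝ}

theorem differentiableAt_toContinuousLinearMap
    (hB : ∀ w, DifferentiableAt ℝ (fun t => B t w) t₀) :
    DifferentiableAt ℝ (fun t => LinearMap.toContinuousLinearMap (B t)) t₀ := by
  let b := Module.finBasis ℝ E
  have hsum : (fun t => LinearMap.toContinuousLinearMap (B t)) = fun t =>
      ∑ i, ContinuousLinearMap.smulRightL ℝ E F
        (LinearMap.toContinuousLinearMap (b.coord i)) (B t (b i)) := by
    ext t w
    conv_lhs => rw [← b.sum_repr w, map_sum]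
    simp
  rw [hsum]
  exact DifferentiableAt.fun_sum fun i _ =>
    (ContinuousLinearMap.differentiableAt _).comp t₀ (hB _)

theorem hasDerivAt_linearMap_apply (hB : ∀ w, DifferentiableAt ℝ (fun t => B t w) t₀)
    {x : ℝ → E} {x' : E} (hx : HasDerivAt x x' t₀) :
    HasDerivAt (fun t => B t (x t)) (deriv (fun t => B t (x t₀)) t₀ + B t₀ x') t₀ := by
  have hC := (differentiableAt_toContinuousLinearMap hB).hasDerivAt
  have hconst := (hC.clm_apply (hasDerivAt_const t₀ (x t₀))).deriv
  simp only [LinearMap.coe_toContinuousLinearMap', map_zero, add_zero] at hconst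
  simpa [hconst] using hC.clm_apply hx

end LinearMapFamily

section CovariantDerivative

variable {E : Type*} [NormedAddCommGroup E] [NormedSpace ℝ E]
  (Γ : E × E → E →ₗ[ℝ] E →ₗ[ℝ] E)

theorem fiberDeriv_eq_fderiv {𝒳 : E × E → E} {pv : E × E}
    (h𝒳 : DifferentiableAt ℝ 𝒳 pv) (h : E) :
    fiberDeriv 𝒳 pv h = fderiv ℝ 𝒳 pv (0, h) :=
  (h𝒳.hasDerivAt_comp_fiberLine h).deriv

theorem covDeriv_eq_fderiv {𝒳 : E × E → E} {pv : E × E}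
    (h𝒳 : DifferentiableAt ℝ 𝒳 pv) (e : E) :
    covDeriv Γ 𝒳 pv e
      = fderiv ℝ 𝒳 pv (e, 0) + Γ pv e (𝒳 pv) - fderiv ℝ 𝒳 pv (0, Γ pv e pv.2) := by
  have hslice : HasFDerivAt (fun q => 𝒳 (q, pv.2))
      ((fderiv ℝ 𝒳 pv).comp (.inl ℝ E E)) pv.1 :=
    h𝒳.hasFDerivAt.comp pv.1 (hasFDerivAt_prodMk_left pv.1 pv.2)
  rw [covDeriv, hslice.fderiv, fiberDeriv_eq_fderiv h𝒳]
  rfl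

theorem Filter.EventuallyEq.covDeriv_eq {𝒳 𝒴 : E × E → E} {pv : E × E}
    (h𝒳𝒴 : 𝒳 =ᶠ[𝓝 pv] 𝒴) (e : E) :
    covDeriv Γ 𝒳 pv e = covDeriv Γ 𝒴 pv e := by
  have hslice : (fun q => 𝒳 (q, pv.2)) =ᶠ[𝓝 pv.1] fun q => 𝒴 (q, pv.2) :=
    h𝒳𝒴.comp_tendsto (Continuous.tendsto' (by fun_prop) _ _ rfl)
  have hline : (fun t : ℝ => 𝒳 (pv.1, pv.2 + t • Γ pv e pv.2))
      =ᶠ[𝓝 0] fun t => 𝒴 (pv.1, pv.2 + t • Γ pv e pv.2) :=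
    h𝒳𝒴.comp_tendsto (tendsto_fiberLine pv.1 pv.2 _)
  simp only [covDeriv, fiberDeriv, hslice.fderiv_eq, hline.deriv_eq, h𝒳𝒴.eq_of_nhds]

theorem covDeriv_fiberDeriv {𝒳 : E × E → E} {p v : E} (h𝒳 : ContDiffAt ℝ 2 𝒳 (p, v))
    (e h : E) :
    covDeriv Γ (fun qu => fiberDeriv 𝒳 qu h) (p, v) e
      = fderiv ℝ (fderiv ℝ 𝒳) (p, v) (e, 0) (0, h) + Γ (p, v) e (fderiv ℝ 𝒳 (p, v) (0, h))
        - fderiv ℝ (fderiv ℝ 𝒳) (p, v) (0, Γ (p, v) e v) (0, h) := by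
  have hgerm : (fun qu => fiberDeriv 𝒳 qu h) =ᶠ[𝓝 (p, v)] fun qu => fderiv ℝ 𝒳 qu (0, h) := by
    filter_upwards [h𝒳.eventually (by simp)] with qu hqu
    exact fiberDeriv_eq_fderiv (hqu.differentiableAt (by simp)) h
  have hD : DifferentiableAt ℝ (fderiv ℝ 𝒳) (p, v) :=
    (h𝒳.fderiv_right (m := 1) (by norm_num)).differentiableAt (by simp)
  have hfield := hD.hasFDerivAt.clm_apply (hasFDerivAt_const ((0 : E), h) (p, v))
  rw [hgerm.covDeriv_eq, covDeriv_eq_fderiv Γ hfield.differentiableAt, hfield.fderiv]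
  simp

theorem hasDerivAt_covDeriv_fiberLine [FiniteDimensional ℝ E] {𝒳 : E × E → E} {p v : E}
    (h𝒳 : ContDiffAt ℝ 2 𝒳 (p, v)) (e : E)
    (hΓ : ∀ w, DifferentiableAt ℝ (fun pv => Γ pv e w) (p, v)) (h : E) :
    HasDerivAt (fun t : ℝ => covDeriv Γ 𝒳 (p, v + t • h) e)
      (fderiv ℝ (fderiv ℝ 𝒳) (p, v) (0, h) (e, 0)
        + (vertDeriv Γ (p, v) e (𝒳 (p, v)) h + Γ (p, v) e (fderiv ℝ 𝒳 (p, v) (0, h)))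
        - (fderiv ℝ (fderiv ℝ 𝒳) (p, v) (0, h) (0, Γ (p, v) e v)
          + fderiv ℝ 𝒳 (p, v) (0, vertDeriv Γ (p, v) e v h + Γ (p, v) e h))) 0 := by
  have hΓline : ∀ w, DifferentiableAt ℝ (fun t : ℝ => Γ (p, v + t • h) e w) 0 :=
    fun w => ((hΓ w).hasDerivAt_comp_fiberLine h).differentiableAt
  have hD : DifferentiableAt ℝ (fderiv ℝ 𝒳) (p, v) :=
    (h𝒳.fderiv_right (m := 1) (by norm_num)).differentiableAt (by simp)
  have hDline := hD.hasDerivAt_comp_fiberLine h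
  have hslice := hDline.clm_apply (hasDerivAt_const 0 ((e, 0) : E × E))
  have htransport := hasDerivAt_linearMap_apply hΓline
    ((h𝒳.differentiableAt (by simp)).hasDerivAt_comp_fiberLine h)
  have hcorrection := hDline.clm_apply ((hasDerivAt_const 0 (0 : E)).prodMk
    (hasDerivAt_linearMap_apply hΓline (hasDerivAt_line v h)))
  have hexpand : (fun t : ℝ => covDeriv Γ 𝒳 (p, v + t • h) e) =ᶠ[𝓝 0] fun t =>
      fderiv ℝ 𝒳 (p, v + t • h) (e, 0) + Γ (p, v + t • h) e (𝒳 (p, v + t • h))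
        - fderiv ℝ 𝒳 (p, v + t • h) (0, Γ (p, v + t • h) e (v + t • h)) := by
    filter_upwards [(tendsto_fiberLine p v h).eventually (h𝒳.eventually (by simp))] with t ht
    exact covDeriv_eq_fderiv Γ (ht.differentiableAt (by simp)) e
  simp only [zero_smul, add_zero, map_zero] at hslice htransport hcorrection
  exact ((hslice.add htransport).sub hcorrection).congr_of_eventuallyEq hexpand

end CovariantDerivative

/-- for every smooth anisotropic vector field `𝒳`, every `(p,v) ∈ A` and
all `e,h`, the fiber derivative of the covariant derivative satisfies
`d/dt|₀ ∇^{(p,v+th)}_e 𝒳 = P_{(p,v)}(e,𝒳(p,v),h) + (∇_e(∂̇𝒳))_{(p,v)}(h)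
  − (∂̇𝒳)_{(p,v)}(P_{(p,v)}(e,v,h))`, where
`(∇_e(∂̇𝒳))_{(p,v)}(h) = ∇^{(p,v)}_e[(q,u) ↦ (∂̇𝒳)_{(q,u)}(h)] − (∂̇𝒳)_{(p,v)}(Γ_{(p,v)}(e,h))`. -/
theorem stmt10 (n : ℕ)
    (F : PseudoFinslerChart (EuclideanSpace ℝ (Fin n)))
    (Γ : EuclideanSpace ℝ (Fin n) × EuclideanSpace ℝ (Fin n) →
      EuclideanSpace ℝ (Fin n) →ₗ[ℝ] EuclideanSpace ℝ (Fin n) →ₗ[ℝ] EuclideanSpace ℝ (Fin n))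
    (hΓ : ∀ e h : EuclideanSpace ℝ (Fin n),
      ContDiffOn ℝ (⊤ : ℕ∞) (fun pv => Γ pv e h) F.A)
    (𝒳 : EuclideanSpace ℝ (Fin n) × EuclideanSpace ℝ (Fin n) → EuclideanSpace ℝ (Fin n))
    (h𝒳 : ContDiffOn ℝ (⊤ : ℕ∞) 𝒳 F.A) :
    ∀ p v, (p, v) ∈ F.A → ∀ e h : EuclideanSpace ℝ (Fin n),
      deriv (fun t : ℝ => covDeriv Γ 𝒳 (p, v + t • h) e) 0
        = vertDeriv Γ (p, v) e (𝒳 (p, v)) h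
          + (covDeriv Γ (fun qu => fiberDeriv 𝒳 qu h) (p, v) e
              - fiberDeriv 𝒳 (p, v) (Γ (p, v) e h))
          - fiberDeriv 𝒳 (p, v) (vertDeriv Γ (p, v) e v h) := by
  intro p v hpv e h
  have hA : F.A ∈ 𝓝 (p, v) := F.A_open.mem_nhds hpv
  have h𝒳C2 : ContDiffAt ℝ 2 𝒳 (p, v) :=
    (h𝒳.contDiffAt hA).of_le (WithTop.coe_le_coe.mpr le_top)
  have hΓdiff : ∀ w, DifferentiableAt ℝ (fun pv => Γ pv e w) (p, v) :=
    fun w => ((hΓ e w).contDiffAt hA).differentiableAt (by simp)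
  have hsymm := h𝒳C2.isSymmSndFDerivAt (by simp)
  have h𝒳diff := h𝒳C2.differentiableAt (by simp)
  have hsplit : ∀ a b : EuclideanSpace ℝ (Fin n),
      fderiv ℝ 𝒳 (p, v) (0, a + b) = fderiv ℝ 𝒳 (p, v) (0, a) + fderiv ℝ 𝒳 (p, v) (0, b) := by
    intro a b
    rw [← map_add, Prod.mk_add_mk, add_zero]
  rw [(hasDerivAt_covDeriv_fiberLine Γ h𝒳C2 e hΓdiff h).deriv, covDeriv_fiberDeriv Γ h𝒳C2,
    hsymm (e, 0) (0, h), hsymm (0, Γ (p, v) e v) (0, h), fiberDeriv_eq_fderiv h𝒳diff,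
    fiberDeriv_eq_fderiv h𝒳diff, hsplit]
  abel
end
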